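/- For n \geq 3, the identity (2n-3) F_{2n-4} + \binom{2n-3}{3} F_{2n-6} = \frac{n+1}{3(2n-1)} F_{2n} holds, where F_{2k} = (2k-1)!!. -/

import Mathlib

open Finset

/-- A matching (fixed point free involution). -/
def IsMatching {m : ℕ} (π : Equiv.Perm (Fin m)) : Prop :=
  π * π = 1 ∧ ∀ i, π i ≠ i

instance {m : ℕ} (π : Equiv.Perm (Fin m)) : Decidable (IsMatching π) := by
  unfold IsMatching; infer_instance

/-- The set of matchings in `S_{2n}`. -/
def matchings (n : ℕ) : Finset (Equiv.Perm (Fin (2 * n))) :=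
  Finset.univ.filter IsMatching

/-- Descent set (0-based indices `i` with `π i > π (i+1)`). -/
def desSet {m : ℕ} (π : Equiv.Perm (Fin m)) : Finset (Fin m) :=
  Finset.univ.filter fun i =>
    if h : (i : ℕ) + 1 < m then π ⟨(i : ℕ) + 1, h⟩ < π i else False

/-- Descent number `d(π) = |Des(π)| + 1`. -/
def desNum {m : ℕ} (π : Equiv.Perm (Fin m)) : ℕ := (desSet π).card + 1

/-- Major index: sum of the (1-based) descent positions. -/
def maj {m : ℕ} (π : Equiv.Perm (Fin m)) : ℕ := ∑ i ∈ desSet π, ((i : ℕ) + 1)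

/-- The double factorial `(2n-1)!! = ∏_{i=1}^n (2i-1)`. -/
def doubleFac (n : ℕ) : ℕ := ∏ i ∈ Finset.range n, (2 * i + 1)

lemma doubleFac_succ (n : ℕ) : doubleFac (n + 1) = doubleFac n * (2 * n + 1) :=
  Finset.prod_range_succ _ n

lemma six_mul_choose_three (k : ℕ) : 6 * (k + 3).choose 3 = (k + 3) * (k + 2) * (k + 1) := by
  rw [show 6 = Nat.factorial 3 from rfl, ← Nat.descFactorial_eq_factorial_mul_choose]
  simp only [Nat.descFactorial_succ, Nat.descFactorial_zero]
  rw [show k + 3 - 2 = k + 1 by omega, show k + 3 - 1 = k + 2 by omega, Nat.sub_zero]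
  ring

theorem stmt6 (n : ℕ) (hn : 3 ≤ n) :
    ((2 * n - 3 : ℕ) : ℚ) * doubleFac (n - 2)
        + (Nat.choose (2 * n - 3) 3 : ℚ) * doubleFac (n - 3)
      = ((n : ℚ) + 1) / (3 * (2 * n - 1)) * doubleFac n := by
  obtain ⟨m, rfl⟩ := Nat.exists_eq_add_of_le' hn
  rw [show 2 * (m + 3) - 3 = 2 * m + 3 by omega, Nat.add_sub_cancel,
    show m + 3 - 2 = m + 1 by omega, doubleFac_succ (m + 2), doubleFac_succ (m + 1),
    doubleFac_succ m]
  have hchoose : ((2 * m + 3).choose 3 : ℚ) = (2 * m + 3) * (2 * m + 2) * (2 * m + 1) / 6 := by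
    rw [eq_div_iff (by norm_num), mul_comm]
    exact_mod_cast six_mul_choose_three (2 * m)
  have hden : (3 : ℚ) * (2 * ((m + 3 : ℕ) : ℚ) - 1) = 3 * (2 * m + 5) := by push_cast; ring
  rw [hchoose, hden]
  push_cast
  field_simp
  ring
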